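/- arXiv:2409.12446 — 3 statements merged into one kernel-verified Lean document; each statement's English description precedes it below -/
import Mathlib

section
/- Let α be a measurable space, μ a probability measure on α, ε ∈ (0, 1), δ ∈ (0, 1), H a nonempty finite set of functions α → β such that for all f, g ∈ H the set {x : f(x) ≠ g(x)} is measurable, and f* ∈ H. If the natural number n satisfies n ≥ (2·ln|H| + ln(1/δ))/ε, then μ^{⊗n} of the event {x ∈ α^n : there exists f ∈ H with f(xᵢ) = f*(xᵢ) for all i = 1, …, n and μ{f ≠ f*} ≥ ε} is at most δ. -/
open MeasureTheory
open scoped ENNReal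

/-- Sample-complexity form of the main theorem: with `n ≥ (2·ln|H| + ln(1/δ))/ε` i.i.d.
samples labeled by `f* ∈ H`, with probability at least `1 - δ` every interpolator in `H`
has test error less than `ε`. -/
theorem interpolator_sample_complexity {α : Type*} [MeasurableSpace α]
    (μ : Measure α) [IsProbabilityMeasure μ] {β : Type*} (ε δ : ℝ)
    (hε0 : 0 < ε) (hε1 : ε < 1) (hδ0 : 0 < δ) (hδ1 : δ < 1)
    (H : Finset (α → β)) (hH : H.Nonempty)
    (hmeas : ∀ f ∈ H, ∀ g ∈ H, MeasurableSet {x | f x ≠ g x})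
    (fstar : α → β) (hfstar : fstar ∈ H) (n : ℕ)
    (hn : (n : ℝ) ≥ (2 * Real.log H.card + Real.log (1 / δ)) / ε) :
    (Measure.pi fun _ : Fin n => μ)
        {x | ∃ f ∈ H, (∀ i, f (x i) = fstar (x i)) ∧
          ENNReal.ofReal ε ≤ μ {y | f y ≠ fstar y}}
      ≤ ENNReal.ofReal δ := by
  classical
  set B : Finset (α → β) := H.filter (fun f => ENNReal.ofReal ε ≤ μ {y | f y ≠ fstar y})
    with hB
  have hsub : {x : Fin n → α | ∃ f ∈ H, (∀ i, f (x i) = fstar (x i)) ∧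
      ENNReal.ofReal ε ≤ μ {y | f y ≠ fstar y}}
      ⊆ ⋃ f ∈ B, Set.pi Set.univ (fun _ : Fin n => {y | f y = fstar y}) := by
    rintro x ⟨f, hf, hagree, hbad⟩
    refine Set.mem_biUnion (Finset.mem_filter.mpr ⟨hf, hbad⟩) ?_
    intro i _
    exact hagree i
  have key : ∀ f ∈ B,
      (Measure.pi fun _ : Fin n => μ)
        (Set.pi Set.univ (fun _ : Fin n => {y | f y = fstar y}))
        ≤ ENNReal.ofReal ((1 - ε) ^ n) := by
    intro f hfB
    obtain ⟨hfH, hbad⟩ := Finset.mem_filter.mp hfB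
    have hmf : MeasurableSet {y | f y ≠ fstar y} := hmeas f hfH fstar hfstar
    have hpi : (Measure.pi fun _ : Fin n => μ)
        (Set.pi Set.univ (fun _ : Fin n => {y | f y = fstar y}))
        = (μ {y | f y = fstar y}) ^ n := by
      rw [Measure.pi_pi, Finset.prod_const, Finset.card_univ, Fintype.card_fin]
    have hcompl : {y | f y = fstar y} = {y | f y ≠ fstar y}ᶜ := by
      ext y; simp [Set.mem_compl_iff]
    have hle : μ {y | f y = fstar y} ≤ ENNReal.ofReal (1 - ε) := by
      rw [hcompl, measure_compl hmf (measure_ne_top μ _), measure_univ]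
      have : ENNReal.ofReal (1 - ε) = 1 - ENNReal.ofReal ε := by
        rw [ENNReal.ofReal_sub 1 hε0.le, ENNReal.ofReal_one]
      rw [this]
      exact tsub_le_tsub_left hbad 1
    rw [hpi, ENNReal.ofReal_pow (by linarith : (0:ℝ) ≤ 1 - ε) n]
    exact pow_le_pow_left' hle n
  have hcard1 : (1 : ℝ) ≤ H.card := by
    exact_mod_cast Nat.one_le_iff_ne_zero.mpr (Finset.card_ne_zero_of_mem hfstar)
  have hcardpos : (0 : ℝ) < H.card := by linarith
  -- real inequality: H.card * (1-ε)^n ≤ δ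
  have hreal : (H.card : ℝ) * (1 - ε) ^ n ≤ δ := by
    have hlog : Real.log H.card + Real.log (1 / δ) ≤ ε * n := by
      have hlc : 0 ≤ Real.log H.card := Real.log_nonneg hcard1
      have := (div_le_iff₀ hε0).mp hn
      nlinarith
    have h1 : (1 - ε) ^ n ≤ Real.exp (-(ε * n)) := by
      have hb : 1 - ε ≤ Real.exp (-ε) := by
        have := Real.add_one_le_exp (-ε); linarith
      calc (1 - ε) ^ n ≤ Real.exp (-ε) ^ n :=
            pow_le_pow_left₀ (by linarith) hb n
        _ = Real.exp (-(ε * n)) := by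
            rw [← Real.exp_nat_mul]; ring_nf
    have h2 : Real.exp (-(ε * n)) ≤ δ / H.card := by
      have : -(ε * n) ≤ Real.log (δ / H.card) := by
        rw [Real.log_div (ne_of_gt hδ0) (ne_of_gt hcardpos)]
        have : Real.log (1 / δ) = - Real.log δ := by
          rw [Real.log_div one_ne_zero (ne_of_gt hδ0), Real.log_one]; ring
        linarith [hlog, this ▸ hlog]
      calc Real.exp (-(ε * n)) ≤ Real.exp (Real.log (δ / H.card)) :=
            Real.exp_le_exp.mpr this
        _ = δ / H.card := Real.exp_log (by positivity)
    calc (H.card : ℝ) * (1 - ε) ^ n ≤ (H.card : ℝ) * Real.exp (-(ε * n)) := by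
          apply mul_le_mul_of_nonneg_left h1 (le_of_lt hcardpos)
      _ ≤ (H.card : ℝ) * (δ / H.card) := by
          apply mul_le_mul_of_nonneg_left h2 (le_of_lt hcardpos)
      _ = δ := by field_simp
  refine le_trans (measure_mono hsub) ?_
  have step1 := measure_biUnion_finset_le (μ := Measure.pi fun _ : Fin n => μ) B
    (fun f => Set.pi Set.univ (fun _ : Fin n => {y | f y = fstar y}))
  refine le_trans step1 ?_
  have step2 : ∑ f ∈ B, (Measure.pi fun _ : Fin n => μ)
      (Set.pi Set.univ (fun _ : Fin n => {y | f y = fstar y}))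
      ≤ ∑ _f ∈ B, ENNReal.ofReal ((1 - ε) ^ n) := Finset.sum_le_sum key
  refine le_trans step2 ?_
  rw [Finset.sum_const, nsmul_eq_mul]
  have step3 : (B.card : ℝ≥0∞) * ENNReal.ofReal ((1 - ε) ^ n)
      ≤ (H.card : ℝ≥0∞) * ENNReal.ofReal ((1 - ε) ^ n) := by
    gcongr
    exact Finset.filter_subset _ _
  refine le_trans step3 ?_
  rw [show ((H.card : ℝ≥0∞) : ℝ≥0∞) = ENNReal.ofReal (H.card : ℝ) from
    (ENNReal.ofReal_natCast _).symm, ← ENNReal.ofReal_mul (by positivity)]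
  exact ENNReal.ofReal_le_ofReal hreal
end

section
/- Let α be a measurable space, μ a probability measure on α, n ≥ 1 a natural number, H a nonempty finite set of functions α → β such that for all f, g ∈ H the set {x : f(x) ≠ g(x)} is measurable, and f* ∈ H. Let ĥ : α^n → H be a selection rule such that for every f ∈ H the set {x ∈ α^n : ĥ(x) = f} is measurable, and such that ĥ always interpolates: for every x ∈ α^n and every i, ĥ(x)(xᵢ) = f*(xᵢ). Then the product measure μ^{⊗n} ⊗ μ of the set {(x, x') ∈ α^n × α : ĥ(x)(x') ≠ f*(x')} is at most (1 + 2·ln|H|)/n. -/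
open MeasureTheory
open scoped ENNReal

private lemma half_le_log_two : (1:ℝ)/2 ≤ Real.log 2 := by
  rw [Real.le_log_iff_exp_le (by norm_num)]
  have h1 : Real.exp (1/2) ^ 2 = Real.exp 1 := by
    rw [← Real.exp_nat_mul]; norm_num
  have h2 := Real.exp_one_lt_d9
  nlinarith [Real.exp_pos (1/2)]

private lemma two_log_le_self {m : ℝ} (hm : 1 ≤ m) : 2 * Real.log m ≤ m := by
  have h0 : (0:ℝ) ≤ m := by linarith
  have hs : Real.log m = 2 * Real.log (Real.sqrt m) := by
    rw [Real.log_sqrt h0]; ring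
  have h1 : Real.log (Real.sqrt m) ≤ Real.sqrt m - 1 :=
    Real.log_le_sub_one_of_pos (Real.sqrt_pos.mpr (by linarith))
  have h2 : Real.sqrt m ^ 2 = m := Real.sq_sqrt h0
  nlinarith [sq_nonneg (Real.sqrt m - 2), Real.sqrt_nonneg m]

private lemma decay_bound {n : ℕ} (hn : 1 ≤ n) {m e : ℝ} (hm : 2 ≤ m)
    (h1 : 2 * Real.log m / n ≤ e) (h2 : e ≤ 1) :
    (1 - e) ^ n * e ≤ (2 * Real.log m / n) / m ^ 2 := by
  have hn0 : (0:ℝ) < n := by exact_mod_cast hn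
  have hm0 : (0:ℝ) < m := by linarith
  set t : ℝ := 2 * Real.log m / n with htdef
  have hlogm : (1:ℝ)/2 ≤ Real.log m :=
    le_trans half_le_log_two (Real.log_le_log (by norm_num) hm)
  have hnt : (n:ℝ) * t = 2 * Real.log m := by
    rw [htdef]; field_simp
  have h1n : (1:ℝ) ≤ (n:ℝ) * t := by rw [hnt]; linarith
  have ht0 : 0 < t := by
    rw [htdef]; positivity
  have he0 : 0 < e := lt_of_lt_of_le ht0 h1
  -- step 1 : (1-e)^n ≤ exp(-(n e))
  have step1 : (1 - e) ^ n ≤ Real.exp (-((n:ℝ) * e)) := by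
    have hb : 1 - e ≤ Real.exp (-e) := by nlinarith [Real.add_one_le_exp (-e)]
    calc (1 - e) ^ n ≤ Real.exp (-e) ^ n := pow_le_pow_left₀ (by linarith) hb n
      _ = Real.exp ((n:ℝ) * (-e)) := (Real.exp_nat_mul _ n).symm
      _ = Real.exp (-((n:ℝ) * e)) := by ring_nf
  -- step 2 : e * exp(-(n e)) ≤ t * exp(-(n t))
  have key : e ≤ t * Real.exp ((n:ℝ) * (e - t)) := by
    have h3 : e ≤ t * (1 + (n:ℝ) * (e - t)) := by nlinarith
    have h4 : 1 + (n:ℝ) * (e - t) ≤ Real.exp ((n:ℝ) * (e - t)) := by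
      nlinarith [Real.add_one_le_exp ((n:ℝ) * (e - t))]
    calc e ≤ t * (1 + (n:ℝ) * (e - t)) := h3
      _ ≤ t * Real.exp ((n:ℝ) * (e - t)) := by
          exact mul_le_mul_of_nonneg_left h4 ht0.le
  have hexp : Real.exp ((n:ℝ) * (e - t)) * Real.exp (-((n:ℝ) * e))
      = Real.exp (-((n:ℝ) * t)) := by
    rw [← Real.exp_add]; ring_nf
  have step2 : e * Real.exp (-((n:ℝ) * e)) ≤ t * Real.exp (-((n:ℝ) * t)) := by
    calc e * Real.exp (-((n:ℝ) * e))
        ≤ (t * Real.exp ((n:ℝ) * (e - t))) * Real.exp (-((n:ℝ) * e)) :=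
          mul_le_mul_of_nonneg_right key (Real.exp_pos _).le
      _ = t * Real.exp (-((n:ℝ) * t)) := by rw [mul_assoc, hexp]
  -- step 3 : exp(-(n t)) = 1/m^2
  have step3 : Real.exp (-((n:ℝ) * t)) = 1 / m ^ 2 := by
    rw [hnt]
    have hexp2 : Real.exp (2 * Real.log m) = m ^ 2 := by
      rw [show (2:ℝ) = ((2:ℕ):ℝ) by norm_num, Real.exp_nat_mul, Real.exp_log hm0]
    rw [Real.exp_neg, hexp2, one_div]
  calc (1 - e) ^ n * e ≤ Real.exp (-((n:ℝ) * e)) * e :=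
        mul_le_mul_of_nonneg_right step1 he0.le
    _ = e * Real.exp (-((n:ℝ) * e)) := mul_comm _ _
    _ ≤ t * Real.exp (-((n:ℝ) * t)) := step2
    _ = t * (1 / m ^ 2) := by rw [step3]
    _ = t / m ^ 2 := by ring

/-- Averaged generalization: any measurable interpolating selection rule `ĥ` from a
finite hypothesis class `H`, on data labeled by `f* ∈ H`, has expected test error at
most `(1 + 2·ln|H|)/n`. -/
theorem interpolating_selection_avg_error {α : Type*} [MeasurableSpace α]
    (μ : Measure α) [IsProbabilityMeasure μ] {β : Type*} (n : ℕ) (hn : 1 ≤ n)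
    (H : Finset (α → β)) (hH : H.Nonempty)
    (hmeas : ∀ f ∈ H, ∀ g ∈ H, MeasurableSet {x | f x ≠ g x})
    (fstar : α → β) (hfstar : fstar ∈ H)
    (hhat : (Fin n → α) → (α → β)) (hhatH : ∀ x, hhat x ∈ H)
    (hhatmeas : ∀ f ∈ H, MeasurableSet {x : Fin n → α | hhat x = f})
    (hinterp : ∀ x : Fin n → α, ∀ i, hhat x (x i) = fstar (x i)) :
    ((Measure.pi fun _ : Fin n => μ).prod μ)
        {p : (Fin n → α) × α | hhat p.1 p.2 ≠ fstar p.2}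
      ≤ ENNReal.ofReal ((1 + 2 * Real.log H.card) / n) := by
  classical
  set ν : Measure (Fin n → α) := Measure.pi fun _ : Fin n => μ with hν
  by_cases hcard : H.card = 1
  · -- trivial case |H| = 1
    obtain ⟨g, hg⟩ := Finset.card_eq_one.mp hcard
    have hfg : fstar = g := by simpa [hg] using hfstar
    have hset : {p : (Fin n → α) × α | hhat p.1 p.2 ≠ fstar p.2} = ∅ := by
      ext p
      simp only [Set.mem_setOf_eq, Set.mem_empty_iff_false, iff_false, not_not, ne_eq]
      have hh := hhatH p.1
      rw [hg, Finset.mem_singleton] at hh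
      rw [hh, hfg]
    rw [hset]
    simp only [measure_empty]
    exact zero_le
  have hm2 : 2 ≤ H.card := by
    have := hH.card_pos; omega
  have hn0 : (0:ℝ) < n := by exact_mod_cast hn
  set m : ℝ := (H.card : ℝ) with hmdef
  have hm2' : (2:ℝ) ≤ m := by rw [hmdef]; exact_mod_cast hm2
  have hm0 : (0:ℝ) < m := by linarith
  set t : ℝ := 2 * Real.log m / n with htdef
  have ht0 : 0 ≤ t := by
    rw [htdef]
    have : (0:ℝ) ≤ Real.log m := Real.log_nonneg (by linarith)
    positivity
  set ε : (α → β) → ℝ≥0∞ := fun f => μ {a | f a ≠ fstar a} with hεdef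
  set p : (α → β) → ℝ≥0∞ := fun f => ν {x | hhat x = f} with hpdef
  -- Step A : decomposition
  have hsub : {q : (Fin n → α) × α | hhat q.1 q.2 ≠ fstar q.2}
      ⊆ ⋃ f ∈ H, ({x : Fin n → α | hhat x = f} ×ˢ {a | f a ≠ fstar a}) := by
    intro q hq
    simp only [Set.mem_iUnion, Set.mem_prod, Set.mem_setOf_eq]
    exact ⟨hhat q.1, hhatH q.1, rfl, hq⟩
  have hA : (ν.prod μ) {q : (Fin n → α) × α | hhat q.1 q.2 ≠ fstar q.2}
      ≤ ∑ f ∈ H, p f * ε f := by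
    refine (measure_mono hsub).trans ?_
    refine (measure_biUnion_finset_le H _).trans ?_
    refine le_of_eq (Finset.sum_congr rfl fun f hf => ?_)
    exact Measure.prod_prod _ _
  -- Step B : interpolation bound
  have hB : ∀ f ∈ H, p f ≤ (μ {a | f a = fstar a}) ^ n := by
    intro f hf
    have hsub2 : {x : Fin n → α | hhat x = f}
        ⊆ Set.univ.pi (fun _ : Fin n => {a | f a = fstar a}) := by
      intro x hx i _
      simp only [Set.mem_setOf_eq] at hx ⊢
      rw [← hx]
      exact hinterp x i
    refine (measure_mono hsub2).trans (le_of_eq ?_)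
    rw [hν, Measure.pi_pi]
    simp [Finset.prod_const]
  -- Step C : complement relation
  have hC : ∀ f ∈ H, ε f + μ {a | f a = fstar a} = 1 := by
    intro f hf
    have hcompl : {a | f a = fstar a} = {a | f a ≠ fstar a}ᶜ := by
      ext a; simp
    rw [hεdef, hcompl]
    simp only []
    rw [measure_add_measure_compl (hmeas f hf fstar hfstar)]
    exact measure_univ
  -- sum of p over H is at most 1
  have hsum_p : ∑ f ∈ H, p f ≤ 1 := by
    have hdisj : (↑H : Set (α → β)).PairwiseDisjoint
        (fun f => {x : Fin n → α | hhat x = f}) := by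
      intro f hf g hg hfg
      refine Set.disjoint_left.mpr ?_
      intro x hx hx'
      exact hfg (hx.symm.trans hx')
    rw [hpdef]
    simp only []
    rw [← measure_biUnion_finset hdisj (fun f hf => hhatmeas f hf)]
    exact prob_le_one
  set T : ℝ≥0∞ := ENNReal.ofReal t with hTdef
  -- part 1 : small-error hypotheses
  have part1 : ∑ f ∈ H.filter (fun f => ε f ≤ T), p f * ε f ≤ T := by
    calc ∑ f ∈ H.filter (fun f => ε f ≤ T), p f * ε f
        ≤ ∑ f ∈ H.filter (fun f => ε f ≤ T), p f * T := by
          refine Finset.sum_le_sum fun f hf => ?_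
          exact mul_le_mul_right (Finset.mem_filter.mp hf).2 _
      _ = (∑ f ∈ H.filter (fun f => ε f ≤ T), p f) * T := by
          rw [Finset.sum_mul]
      _ ≤ 1 * T := by
          refine mul_le_mul_left ?_ _
          exact le_trans (Finset.sum_le_sum_of_subset (Finset.filter_subset _ _)) hsum_p
      _ = T := one_mul _
  -- part 2 : large-error hypotheses
  have part2 : ∑ f ∈ H.filter (fun f => ¬ ε f ≤ T), p f * ε f
      ≤ ENNReal.ofReal (t / m) := by
    have hterm : ∀ f ∈ H.filter (fun f => ¬ ε f ≤ T),
        p f * ε f ≤ ENNReal.ofReal (t / m ^ 2) := by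
      intro f hf
      obtain ⟨hfH, hflt⟩ := Finset.mem_filter.mp hf
      have hlt : T < ε f := lt_of_not_ge hflt
      have hεfin : ε f ≠ ∞ := (lt_of_le_of_lt prob_le_one ENNReal.one_lt_top).ne
      have hqfin : μ {a | f a = fstar a} ≠ ∞ :=
        (lt_of_le_of_lt prob_le_one ENNReal.one_lt_top).ne
      set e : ℝ := (ε f).toReal with hedef
      have he : t < e := (ENNReal.ofReal_lt_iff_lt_toReal ht0 hεfin).mp hlt
      have he1 : e ≤ 1 := by
        rw [hedef]
        exact ENNReal.toReal_le_of_le_ofReal one_pos.le (by simpa using (prob_le_one : ε f ≤ 1))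
      have htr : e + (μ {a | f a = fstar a}).toReal = 1 := by
        rw [hedef, ← ENNReal.toReal_add hεfin hqfin, hC f hfH]
        simp
      have hqe : (μ {a | f a = fstar a}).toReal = 1 - e := by linarith
      have hmain : p f * ε f ≤ ENNReal.ofReal ((1 - e) ^ n * e) := by
        calc p f * ε f ≤ (μ {a | f a = fstar a}) ^ n * ε f :=
              mul_le_mul_left (hB f hfH) _
          _ = ENNReal.ofReal ((μ {a | f a = fstar a}).toReal ^ n * e) := by
              conv_lhs => rw [← ENNReal.ofReal_toReal hqfin, ← ENNReal.ofReal_toReal hεfin]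
              rw [← ENNReal.ofReal_pow ENNReal.toReal_nonneg,
                ← ENNReal.ofReal_mul (pow_nonneg ENNReal.toReal_nonneg _)]
          _ = ENNReal.ofReal ((1 - e) ^ n * e) := by rw [hqe]
      refine hmain.trans (ENNReal.ofReal_le_ofReal ?_)
      exact decay_bound hn hm2' he.le he1
    calc ∑ f ∈ H.filter (fun f => ¬ ε f ≤ T), p f * ε f
        ≤ (H.filter (fun f => ¬ ε f ≤ T)).card • ENNReal.ofReal (t / m ^ 2) :=
          Finset.sum_le_card_nsmul _ _ _ hterm
      _ = ((H.filter (fun f => ¬ ε f ≤ T)).card : ℝ≥0∞) * ENNReal.ofReal (t / m ^ 2) := by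
          rw [nsmul_eq_mul]
      _ ≤ (H.card : ℝ≥0∞) * ENNReal.ofReal (t / m ^ 2) := by
          refine mul_le_mul_left ?_ _
          exact_mod_cast Nat.cast_le.mpr (Finset.card_filter_le _ _)
      _ = ENNReal.ofReal (m * (t / m ^ 2)) := by
          rw [ENNReal.ofReal_mul hm0.le]
          congr 1
          rw [hmdef]
          simp [ENNReal.ofReal_natCast]
      _ = ENNReal.ofReal (t / m) := by
          congr 1
          field_simp
  -- combine
  have harith : t + t / m ≤ (1 + 2 * Real.log m) / n := by
    have h2lm : 2 * Real.log m ≤ m := two_log_le_self (by linarith)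
    have h1 : t / m ≤ 1 / n := by
      rw [htdef, div_div, div_le_div_iff₀ (by positivity) hn0]
      nlinarith
    have h2 : (1 + 2 * Real.log m) / n = 1 / n + t := by
      rw [htdef]; ring
    linarith
  calc ((Measure.pi fun _ : Fin n => μ).prod μ)
        {q : (Fin n → α) × α | hhat q.1 q.2 ≠ fstar q.2}
      ≤ ∑ f ∈ H, p f * ε f := hA
    _ = ∑ f ∈ H.filter (fun f => ε f ≤ T), p f * ε f
        + ∑ f ∈ H.filter (fun f => ¬ ε f ≤ T), p f * ε f :=
        (Finset.sum_filter_add_sum_filter_not H _ _).symm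
    _ ≤ T + ENNReal.ofReal (t / m) := add_le_add part1 part2
    _ = ENNReal.ofReal (t + t / m) := by
        rw [hTdef, ← ENNReal.ofReal_add ht0 (by positivity)]
    _ ≤ ENNReal.ofReal ((1 + 2 * Real.log m) / n) := ENNReal.ofReal_le_ofReal harith
end

section
/- Let ρ and ε be real numbers with 0 ≤ ρ, 0 < ε, and ρ + ε < 1. Then ρ·ln(ρ/(ρ + ε)) + (1 - ρ)·ln((1 - ρ)/(1 - ρ - ε)) ≥ ε²/(2·(ρ + ε)), where in the case ρ = 0 the first summand is interpreted as 0. -/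
lemma two_mul_log_le (y : ℝ) (hy : 1 ≤ y) : 2 * y * Real.log y ≤ y ^ 2 - 1 := by
  set f : ℝ → ℝ := fun t => t ^ 2 - 1 - 2 * t * Real.log t with hf
  have hd : ∀ t ∈ interior (Set.Ici (1:ℝ)), HasDerivAt f (2 * t - 2 * Real.log t - 2) t := by
    intro t ht
    rw [interior_Ici] at ht
    have ht0 : t ≠ 0 := by
      have : (1:ℝ) < t := ht
      linarith
    have h1 : HasDerivAt (fun t : ℝ => t ^ 2 - 1) (2 * t) t := by
      simpa using (hasDerivAt_pow 2 t).sub_const 1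
    have h2 : HasDerivAt (fun t : ℝ => 2 * t * Real.log t)
        (2 * Real.log t + 2 * t * t⁻¹) t := by
      have := ((hasDerivAt_id t).const_mul 2).mul (Real.hasDerivAt_log ht0)
      exact this.congr_deriv (by simp only [id_eq, mul_one])
    have := h1.sub h2
    have ht0' : (0:ℝ) < t := by have : (1:ℝ) < t := ht; linarith
    refine this.congr_deriv ?_
    rw [mul_assoc, mul_inv_cancel₀ ht0]
    ring
  have hmono : MonotoneOn f (Set.Ici 1) := by
    apply monotoneOn_of_deriv_nonneg (convex_Ici 1)
    · apply ContinuousOn.sub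
      · exact (continuous_pow 2).continuousOn.sub continuousOn_const
      · exact (continuous_const.mul continuous_id).continuousOn.mul
          (Real.continuousOn_log.mono (by intro x hx; simp at hx ⊢; linarith))
    · intro t ht
      exact (hd t ht).differentiableAt.differentiableWithinAt
    · intro t ht
      rw [(hd t ht).deriv]
      have ht1 : (1:ℝ) < t := by rwa [interior_Ici] at ht
      have := Real.log_le_sub_one_of_pos (by linarith : (0:ℝ) < t)
      linarith
  have h := hmono (Set.self_mem_Ici) (Set.mem_Ici.mpr hy) hy
  have hf1 : f 1 = 0 := by simp [hf]
  have hfy : f y = y ^ 2 - 1 - 2 * y * Real.log y := rfl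
  rw [hf1, hfy] at h
  linarith

/-- Bernoulli relative-entropy lower bound (Lemma A.1's main content):
for `0 ≤ ρ`, `0 < ε`, `ρ + ε < 1`,
`D(ρ || ρ+ε) = ρ·ln(ρ/(ρ+ε)) + (1-ρ)·ln((1-ρ)/(1-ρ-ε)) ≥ ε²/(2(ρ+ε))`.
(When `ρ = 0`, the first summand is `0`, as indeed `0 * Real.log _ = 0`.) -/
theorem bernoulli_kl_lower_bound (ρ ε : ℝ) (hρ : 0 ≤ ρ) (hε : 0 < ε)
    (hρε : ρ + ε < 1) :
    ρ * Real.log (ρ / (ρ + ε)) + (1 - ρ) * Real.log ((1 - ρ) / (1 - ρ - ε))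
      ≥ ε ^ 2 / (2 * (ρ + ε)) := by
  set q := ρ + ε with hq
  have hq0 : 0 < q := by positivity
  have hq1 : q < 1 := hρε
  have h1q : 0 < 1 - q := by linarith
  have h1ρ : 0 < 1 - ρ := by linarith
  -- second term bound: (1-ρ) * log ((1-ρ)/(1-q)) ≥ ε
  have hsecond : (1 - ρ) * Real.log ((1 - ρ) / (1 - ρ - ε)) ≥ ε := by
    have hx : (0:ℝ) < (1 - ρ) / (1 - ρ - ε) := by
      apply div_pos h1ρ; linarith
    have hlog := Real.one_sub_inv_le_log_of_pos hx
    have hinv : ((1 - ρ) / (1 - ρ - ε))⁻¹ = (1 - ρ - ε) / (1 - ρ) := by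
      rw [inv_div]
    rw [hinv] at hlog
    have : 1 - (1 - ρ - ε) / (1 - ρ) = ε / (1 - ρ) := by
      field_simp
      ring
    rw [this] at hlog
    have := mul_le_mul_of_nonneg_left hlog (le_of_lt h1ρ)
    calc (1 - ρ) * Real.log ((1 - ρ) / (1 - ρ - ε))
        ≥ (1 - ρ) * (ε / (1 - ρ)) := this
      _ = ε := by field_simp
  -- first term bound
  rcases eq_or_lt_of_le hρ with hρ0 | hρ0
  · -- ρ = 0
    have hρz : ρ = 0 := hρ0.symm
    have hql : q = ε := by rw [hq, hρz, zero_add]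
    have h2 : ε ^ 2 / (2 * q) = ε / 2 := by rw [hql]; field_simp
    rw [hρz] at hsecond ⊢
    rw [h2]
    simp only [zero_mul, zero_add]
    linarith
  · -- ρ > 0
    have hy : 1 ≤ q / ρ := (one_le_div hρ0).mpr (by linarith)
    have hkey := two_mul_log_le (q / ρ) hy
    have hlogdiv : Real.log (q / ρ) = - Real.log (ρ / q) := by
      rw [Real.log_div (ne_of_gt hq0) (ne_of_gt hρ0), Real.log_div (ne_of_gt hρ0) (ne_of_gt hq0)]
      ring
    rw [hlogdiv] at hkey
    -- hkey : 2 * (q/ρ) * (- log (ρ/q)) ≤ (q/ρ)^2 - 1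
    have hfirst : ρ * Real.log (ρ / q) ≥ - (ε * (q + ρ) / (2 * q)) := by
      have h := mul_le_mul_of_nonneg_left hkey (by positivity : (0:ℝ) ≤ ρ ^ 2 / (2 * q))
      have e1 : ρ ^ 2 / (2 * q) * (2 * (q / ρ) * (- Real.log (ρ / q)))
          = - (ρ * Real.log (ρ / q)) := by
        field_simp
      have e2 : ρ ^ 2 / (2 * q) * ((q / ρ) ^ 2 - 1) = (q ^ 2 - ρ ^ 2) / (2 * q) := by
        field_simp
      rw [e1, e2] at h
      have e3 : (q ^ 2 - ρ ^ 2) / (2 * q) = ε * (q + ρ) / (2 * q) := by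
        have : q ^ 2 - ρ ^ 2 = ε * (q + ρ) := by rw [hq]; ring
        rw [this]
      rw [e3] at h
      linarith
    have hgoal : ε - ε * (q + ρ) / (2 * q) = ε ^ 2 / (2 * q) := by
      field_simp
      ring
    have : ρ * Real.log (ρ / q) + (1 - ρ) * Real.log ((1 - ρ) / (1 - ρ - ε))
        ≥ - (ε * (q + ρ) / (2 * q)) + ε := by
      exact add_le_add hfirst hsecond
    calc ρ * Real.log (ρ / q) + (1 - ρ) * Real.log ((1 - ρ) / (1 - ρ - ε))
        ≥ - (ε * (q + ρ) / (2 * q)) + ε := this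
      _ = ε ^ 2 / (2 * q) := by linarith [hgoal]
end
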